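/- Vertex version of the Lindström–Gessel–Viennot lemma: let G be a finite acyclic directed graph without multiple edges, A_1,...,A_k and B_1,...,B_k vertices, w : V → R a vertex weight function into a commutative ring R, and define the weight of a path as the product of the weights of all its vertices (including endpoints). If U is the k×k matrix with u_{ij} equal to the sum of weights of all directed paths from A_i to B_j, then det U equals the sum over permutations π in S_k, with sign, of the weights of all k-tuples of pairwise vertex-disjoint paths γ_i : A_i → B_{π(i)}. -/

import Mathlib

/-!
By the Leibniz formula, `det U` is the signed sum of the weights of all pairs `(π, γ)` of a
permutation and a family of paths `γ i : A i → B (π i)`. The non-disjoint families cancel in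
pairs: fix a linear order on the vertices, take the least vertex `v` lying on two of the paths,
the first and last indices `i < j` of paths through `v`, and exchange the tails of `γ i` and
`γ j` after their visit of `v`, replacing `π` by `π * swap i j`. This reverses the sign and keeps
the weight. It is an involution because the multiset of all vertices of the family does not
change, and since acyclicity makes every path simple, neither does the set of vertices lying on
two paths nor the set of paths through `v`.
-/

open Finset Function Equiv

theorem List.takeWhile_dropWhile_eq_nil {α : Type*} (p : α → Bool) (l : List α) :
    (l.dropWhile p).takeWhile p = [] := by
  induction l with
  | nil => rfl
  | cons x l ih => by_cases h : p x <;> simp [h, ih]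

theorem List.dropWhile_bne_eq_cons {α : Type*} [DecidableEq α] {v : α} {l : List α}
    (h : v ∈ l) :
    ∃ t, l.dropWhile (· != v) = v :: t := by
  induction l with
  | nil => simp at h
  | cons x l ih =>
    by_cases hx : x = v
    · exact ⟨l, by simp [hx]⟩
    · have hl : v ∈ l := by simpa [Ne.symm hx] using h
      simpa [hx] using ih hl

theorem List.IsChain.nodup_of_acyclic {V : Type*} {E : V → V → Prop}
    (hacyclic : ∀ p : List V, p.IsChain E → p.head? = p.getLast? → p.length ≤ 1)
    {p : List V} (hp : p.IsChain E) : p.Nodup := by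
  induction p with
  | nil => exact List.nodup_nil
  | cons x p ih =>
    refine List.nodup_cons.2 ⟨fun hx => ?_, ih hp.tail⟩
    obtain ⟨s, t, rfl⟩ := List.append_of_mem hx
    have hloop : (x :: s ++ [x]).IsChain E := hp.prefix ⟨t, by simp⟩
    simpa using hacyclic _ hloop (by rw [List.getLast?_concat]; rfl)

theorem Fintype.sum_eq_sum_of_add_eq_add {ι M : Type*} [Fintype ι] [DecidableEq ι]
    [AddCommMonoid M] {f g : ι → M} {i j : ι} (hij : i ≠ j) (h : f i + f j = g i + g j)
    (hfg : ∀ l, l ≠ i → l ≠ j → f l = g l) : ∑ l, f l = ∑ l, g l := by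
  have hj : j ∈ univ.erase i := mem_erase.2 ⟨hij.symm, mem_univ j⟩
  rw [← add_sum_erase _ _ (mem_univ i), ← add_sum_erase _ _ hj,
    ← add_sum_erase _ g (mem_univ i), ← add_sum_erase _ g hj, ← add_assoc, ← add_assoc, h]
  refine congrArg _ (Finset.sum_congr rfl fun l hl => ?_)
  obtain ⟨hlj, hli⟩ := mem_erase.1 hl
  exact hfg l (mem_erase.1 hli).1 hlj

theorem finsum_subtype_eq_sum {α M : Type*} [AddCommMonoid M] {P : α → Prop} (s : Finset α)
    (hs : ∀ x, x ∈ s ↔ P x) (f : α → M) :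
    ∑ᶠ x : {x // P x}, f x = ∑ x ∈ s, f x := by
  have hset : {x | P x} = (s : Set α) := Set.ext fun x => (hs x).symm
  rw [← finsum_mem_coe_finset, ← hset]
  exact finsum_set_coe_eq_finsum_mem {x | P x}

theorem Matrix.det_of_sum {ι α R : Type*} [Fintype ι] [DecidableEq ι] [CommRing R]
    (P : ι → ι → Finset α) (f : α → R) :
    (Matrix.of fun i j => ∑ p ∈ P i j, f p).det =
      ∑ σ : Perm ι, (Perm.sign σ : ℤ) • ∑ γ ∈ Fintype.piFinset (fun i => P i (σ i)),
        ∏ i, f (γ i) := by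
  rw [← det_transpose, det_apply]
  refine sum_congr rfl fun σ _ => ?_
  simp only [transpose_apply, of_apply, prod_univ_sum, Units.smul_def]

theorem prod_prod_map_eq_of_sum_coe_eq {V ι R : Type*} [Fintype ι] [CommMonoid R]
    {γ δ : ι → List V} (w : V → R)
    (h : ∑ l, (γ l : Multiset V) = ∑ l, (δ l : Multiset V)) :
    ∏ l, ((γ l).map w).prod = ∏ l, ((δ l).map w).prod := by
  have hmap (γ : ι → List V) :
      ∏ l, ((γ l).map w).prod = ((∑ l, (γ l : Multiset V)).map w).prod := by
    rw [← Multiset.coe_mapAddMonoidHom, map_sum, Multiset.prod_sum]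
    simp
  rw [hmap, hmap, h]

def IsPath {V : Type*} (E : V → V → Prop) (a b : V) (p : List V) : Prop :=
  p.IsChain E ∧ p.head? = some a ∧ p.getLast? = some b

theorem finite_setOf_isPath {V : Type*} [Fintype V] {E : V → V → Prop}
    (hnodup : ∀ p : List V, p.IsChain E → p.Nodup) (a b : V) :
    {p : List V | IsPath E a b p}.Finite :=
  (List.finite_length_le V (Fintype.card V)).subset fun p hp => (hnodup p hp.1).length_le_card

section Splice

variable {V : Type*} [DecidableEq V]

def spliceAt (v : V) (p q : List V) : List V :=
  p.takeWhile (· != v) ++ q.dropWhile (· != v)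

theorem spliceAt_spliceAt (v : V) (p q : List V) :
    spliceAt v (spliceAt v p q) (spliceAt v q p) = p := by
  have hpre : ∀ l : List V, ∀ a ∈ l.takeWhile (· != v), (a != v) = true :=
    fun _ _ => List.mem_takeWhile_imp
  rw [spliceAt, spliceAt, spliceAt, List.takeWhile_append_of_pos (hpre p),
    List.takeWhile_dropWhile_eq_nil, List.dropWhile_append_of_pos (hpre q),
    List.dropWhile_idempotent, List.append_nil, List.takeWhile_append_dropWhile]

theorem coe_spliceAt_add_coe_spliceAt (v : V) (p q : List V) :
    (spliceAt v p q : Multiset V) + spliceAt v q p = p + q := by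
  conv_rhs => rw [← p.takeWhile_append_dropWhile (p := (· != v)),
    ← q.takeWhile_append_dropWhile (p := (· != v))]
  simp only [spliceAt, ← Multiset.coe_add]
  abel

theorem mem_spliceAt (v : V) (p : List V) {q : List V} (h : v ∈ q) : v ∈ spliceAt v p q := by
  obtain ⟨t, ht⟩ := List.dropWhile_bne_eq_cons h
  simp [spliceAt, ht]

theorem IsPath.spliceAt {E : V → V → Prop} {a b c d v : V} {p q : List V}
    (hp : IsPath E a b p) (hq : IsPath E c d q) (hvp : v ∈ p) (hvq : v ∈ q) :
    IsPath E a d (spliceAt v p q) := by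
  obtain ⟨tp, htp⟩ := List.dropWhile_bne_eq_cons hvp
  obtain ⟨tq, htq⟩ := List.dropWhile_bne_eq_cons hvq
  have hp' := p.takeWhile_append_dropWhile (p := (· != v))
  have hq' := q.takeWhile_append_dropWhile (p := (· != v))
  rw [htp] at hp'
  rw [htq] at hq'
  obtain ⟨hpc, hpa, -⟩ := hp
  obtain ⟨hqc, -, hqd⟩ := hq
  rw [← hp', List.isChain_append] at hpc
  rw [← hq', List.isChain_append] at hqc
  rw [← hp'] at hpa
  rw [← hq'] at hqd
  refine ⟨?_, ?_, ?_⟩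
  all_goals rw [_root_.spliceAt, htq]
  · exact List.isChain_append.2 ⟨hpc.1, hqc.2.1, hpc.2.2⟩
  · simpa [List.head?_append] using hpa
  · simpa [List.getLast?_append] using hqd

end Splice

section TailSwap

variable {V ι : Type*} [DecidableEq V] [DecidableEq ι]

def tailSwap (v : V) (i j : ι) (γ : ι → List V) : ι → List V :=
  update (update γ i (spliceAt v (γ i) (γ j))) j (spliceAt v (γ j) (γ i))

variable {v : V} {i j : ι} {γ : ι → List V}

theorem tailSwap_apply_left (hij : i ≠ j) : tailSwap v i j γ i = spliceAt v (γ i) (γ j) := by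
  rw [tailSwap, update_of_ne hij, update_self]

theorem tailSwap_apply_right : tailSwap v i j γ j = spliceAt v (γ j) (γ i) :=
  update_self ..

theorem tailSwap_apply_of_ne {l : ι} (hi : l ≠ i) (hj : l ≠ j) :
    tailSwap v i j γ l = γ l := by
  rw [tailSwap, update_of_ne hj, update_of_ne hi]

theorem tailSwap_tailSwap (hij : i ≠ j) : tailSwap v i j (tailSwap v i j γ) = γ := by
  funext l
  rcases eq_or_ne l i with rfl | hi
  · rw [tailSwap_apply_left hij, tailSwap_apply_left hij, tailSwap_apply_right, spliceAt_spliceAt]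
  rcases eq_or_ne l j with rfl | hj
  · rw [tailSwap_apply_right, tailSwap_apply_left hij, tailSwap_apply_right, spliceAt_spliceAt]
  · rw [tailSwap_apply_of_ne hi hj, tailSwap_apply_of_ne hi hj]

theorem sum_coe_tailSwap [Fintype ι] (hij : i ≠ j) :
    ∑ l, (tailSwap v i j γ l : Multiset V) = ∑ l, (γ l : Multiset V) :=
  Fintype.sum_eq_sum_of_add_eq_add hij
    (by rw [tailSwap_apply_left hij, tailSwap_apply_right, coe_spliceAt_add_coe_spliceAt])
    fun _ hi hj => by rw [tailSwap_apply_of_ne hi hj]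

theorem mem_tailSwap_iff (hvi : v ∈ γ i) (hvj : v ∈ γ j) (l : ι) :
    v ∈ tailSwap v i j γ l ↔ v ∈ γ l := by
  rcases eq_or_ne l j with rfl | hj
  · rw [tailSwap_apply_right]
    exact iff_of_true (mem_spliceAt v _ hvi) hvj
  rcases eq_or_ne l i with rfl | hi
  · rw [tailSwap_apply_left hj]
    exact iff_of_true (mem_spliceAt v _ hvj) hvi
  · rw [tailSwap_apply_of_ne hi hj]

theorem isPath_tailSwap {E : V → V → Prop} {A : ι → V} {B : ι → V} {σ : Perm ι}
    (hγ : ∀ l, IsPath E (A l) (B (σ l)) (γ l)) (hij : i ≠ j) (hvi : v ∈ γ i)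
    (hvj : v ∈ γ j) (l : ι) : IsPath E (A l) (B ((σ * swap i j) l)) (tailSwap v i j γ l) := by
  rcases eq_or_ne l i with rfl | hi
  · rw [tailSwap_apply_left hij, Perm.mul_apply, swap_apply_left]
    exact (hγ l).spliceAt (hγ j) hvi hvj
  rcases eq_or_ne l j with rfl | hj
  · rw [tailSwap_apply_right, Perm.mul_apply, swap_apply_right]
    exact (hγ l).spliceAt (hγ i) hvj hvi
  · rw [tailSwap_apply_of_ne hi hj, Perm.mul_apply, swap_apply_of_ne_of_ne hi hj]
    exact hγ l

end TailSwap

section Crossings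

variable {V ι : Type*} [DecidableEq V] [Fintype ι]

def pathsThrough (γ : ι → List V) (u : V) : Finset ι := {l | u ∈ γ l}

def crossings (γ : ι → List V) : Finset V :=
  {u ∈ univ.biUnion fun l => (γ l).toFinset | 1 < #(pathsThrough γ u)}

variable {γ δ : ι → List V}

theorem mem_crossings {u : V} : u ∈ crossings γ ↔ 1 < #(pathsThrough γ u) := by
  refine mem_filter.trans ⟨And.right, fun h => ⟨?_, h⟩⟩
  obtain ⟨l, hl⟩ := card_pos.1 (one_pos.trans h)
  exact mem_biUnion.2 ⟨l, mem_univ l, List.mem_toFinset.2 (mem_filter.1 hl).2⟩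

theorem card_pathsThrough (hγ : ∀ l, (γ l).Nodup) (u : V) :
    #(pathsThrough γ u) = (∑ l, (γ l : Multiset V)).count u := by
  rw [pathsThrough, card_filter, Multiset.count_sum']
  exact Finset.sum_congr rfl fun l _ => by rw [Multiset.coe_count, (hγ l).count]

theorem crossings_eq_of_sum_coe_eq (hγ : ∀ l, (γ l).Nodup) (hδ : ∀ l, (δ l).Nodup)
    (h : ∑ l, (γ l : Multiset V) = ∑ l, (δ l : Multiset V)) :
    crossings γ = crossings δ := by
  ext u
  rw [mem_crossings, mem_crossings, card_pathsThrough hγ, card_pathsThrough hδ, h]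

theorem crossings_nonempty_of_not_pairwise_disjoint (h : ¬ Pairwise (List.Disjoint on γ)) :
    (crossings γ).Nonempty := by
  simp only [Pairwise, onFun, List.Disjoint, not_forall] at h
  obtain ⟨i, j, hij, u, hui, huj, -⟩ := h
  refine ⟨u, mem_crossings.2 (one_lt_card.2 ⟨i, ?_, j, ?_, hij⟩)⟩ <;> simpa [pathsThrough]

end Crossings

section Involution

variable {V ι : Type*} [LinearOrder V] [Fintype ι] [LinearOrder ι]

noncomputable def lgvInvolution (x : Perm ι × (ι → List V)) : Perm ι × (ι → List V) :=
  if h : (crossings x.2).Nonempty then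
    let v := (crossings x.2).min' h
    have hT : (pathsThrough x.2 v).Nonempty :=
      card_pos.1 (one_pos.trans (mem_crossings.1 ((crossings x.2).min'_mem h)))
    let i := (pathsThrough x.2 v).min' hT
    let j := (pathsThrough x.2 v).max' hT
    (x.1 * swap i j, tailSwap v i j x.2)
  else x

variable {π : Perm ι} {γ : ι → List V} {v : V} {i j : ι}

theorem lgvInvolution_eq (hv : IsLeast (crossings γ : Set V) v)
    (hi : IsLeast (pathsThrough γ v : Set ι) i) (hj : IsGreatest (pathsThrough γ v : Set ι) j) :
    lgvInvolution (π, γ) = (π * swap i j, tailSwap v i j γ) := by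
  have h : (crossings γ).Nonempty := ⟨v, hv.1⟩
  obtain rfl := (isLeast_min' _ h).unique hv
  rw [lgvInvolution, dif_pos h]
  generalize_proofs hT
  obtain rfl := (isLeast_min' _ hT).unique hi
  obtain rfl := (isGreatest_max' _ hT).unique hj
  rfl

theorem exists_lgvInvolution_eq {E : V → V → Prop}
    (hnodup : ∀ p : List V, p.IsChain E → p.Nodup) {A B : ι → V}
    (hγ : ∀ l, IsPath E (A l) (B (π l)) (γ l))
    (hcross : ¬ Pairwise (List.Disjoint on γ)) :
    ∃ v i j, i ≠ j ∧ v ∈ γ i ∧ v ∈ γ j ∧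
      lgvInvolution (π, γ) = (π * swap i j, tailSwap v i j γ) ∧
      lgvInvolution (π * swap i j, tailSwap v i j γ) = (π, γ) := by
  have hC := crossings_nonempty_of_not_pairwise_disjoint hcross
  set v := (crossings γ).min' hC
  have hT : 1 < #(pathsThrough γ v) := mem_crossings.1 ((crossings γ).min'_mem hC)
  have hT' : (pathsThrough γ v).Nonempty := card_pos.1 (one_pos.trans hT)
  set i := (pathsThrough γ v).min' hT'
  set j := (pathsThrough γ v).max' hT'
  have hij : i ≠ j := (min'_lt_max'_of_card _ hT).ne
  have hvi : v ∈ γ i := (mem_filter.1 ((pathsThrough γ v).min'_mem hT')).2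
  have hvj : v ∈ γ j := (mem_filter.1 ((pathsThrough γ v).max'_mem hT')).2
  have hcross' : crossings (tailSwap v i j γ) = crossings γ :=
    crossings_eq_of_sum_coe_eq (fun l => hnodup _ ((isPath_tailSwap hγ hij hvi hvj l).1))
      (fun l => hnodup _ (hγ l).1) (sum_coe_tailSwap hij)
  have hthrough : pathsThrough (tailSwap v i j γ) v = pathsThrough γ v := by
    ext l
    simp only [pathsThrough, mem_filter, mem_univ, true_and, mem_tailSwap_iff hvi hvj]
  have hv : IsLeast (crossings γ : Set V) v := isLeast_min' _ hC
  have hi : IsLeast (pathsThrough γ v : Set ι) i := isLeast_min' _ hT'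
  have hj : IsGreatest (pathsThrough γ v : Set ι) j := isGreatest_max' _ hT'
  refine ⟨v, i, j, hij, hvi, hvj, lgvInvolution_eq hv hi hj, ?_⟩
  rw [← hcross'] at hv
  rw [← hthrough] at hi hj
  rw [lgvInvolution_eq hv hi hj, mul_swap_mul_self, tailSwap_tailSwap hij]

end Involution

section Cancellation

variable {V ι R : Type*} [LinearOrder V] [Fintype ι] [LinearOrder ι] [CommRing R]

open Classical in
theorem sum_sign_smul_sum_not_pairwise_disjoint_eq_zero {E : V → V → Prop}
    (hnodup : ∀ p : List V, p.IsChain E → p.Nodup) (A B : ι → V) (w : V → R)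
    (P : V → V → Finset (List V)) (hP : ∀ a b p, p ∈ P a b ↔ IsPath E a b p) :
    ∑ σ : Perm ι, (Perm.sign σ : ℤ) •
      ∑ γ ∈ Fintype.piFinset (fun i => P (A i) (B (σ i)))
          with ¬ Pairwise (List.Disjoint on γ), ∏ i, ((γ i).map w).prod = 0 := by
  simp_rw [smul_sum]
  rw [sum_sigma']
  refine sum_involution
    (fun x _ => ⟨(lgvInvolution (x.1, x.2)).1, (lgvInvolution (x.1, x.2)).2⟩) ?_ ?_ ?_ ?_
  all_goals
    rintro ⟨π, γ⟩ hx
    simp only [mem_sigma, mem_univ, true_and, mem_filter, Fintype.mem_piFinset, hP] at hx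
    obtain ⟨v, i, j, hij, hvi, hvj, hinv, hinv'⟩ := exists_lgvInvolution_eq hnodup hx.1 hx.2
    simp only [hinv]
  · rw [prod_prod_map_eq_of_sum_coe_eq w (sum_coe_tailSwap hij), Perm.sign_mul, Perm.sign_swap hij]
    simp
  · simp [hij]
  · simp only [mem_sigma, mem_univ, true_and, mem_filter, Fintype.mem_piFinset, hP]
    exact ⟨isPath_tailSwap hx.1 hij hvi hvj, fun hdisj =>
      hdisj hij ((mem_tailSwap_iff hvi hvj i).2 hvi) ((mem_tailSwap_iff hvi hvj j).2 hvj)⟩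
  · simp only [hinv']

open Classical in
theorem sum_sign_smul_sum_eq_sum_pairwise_disjoint {E : V → V → Prop}
    (hnodup : ∀ p : List V, p.IsChain E → p.Nodup) (A B : ι → V) (w : V → R)
    (P : V → V → Finset (List V)) (hP : ∀ a b p, p ∈ P a b ↔ IsPath E a b p) :
    ∑ σ : Perm ι, (Perm.sign σ : ℤ) •
      ∑ γ ∈ Fintype.piFinset (fun i => P (A i) (B (σ i))), ∏ i, ((γ i).map w).prod =
    ∑ σ : Perm ι, (Perm.sign σ : ℤ) •
      ∑ γ ∈ Fintype.piFinset (fun i => P (A i) (B (σ i))) with Pairwise (List.Disjoint on γ),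
        ∏ i, ((γ i).map w).prod := by
  rw [← sub_eq_zero, ← sum_sub_distrib,
    ← sum_sign_smul_sum_not_pairwise_disjoint_eq_zero hnodup A B w P hP]
  refine sum_congr rfl fun σ _ => ?_
  rw [← smul_sub, ← sum_filter_add_sum_filter_not _ (fun γ => Pairwise (List.Disjoint on γ)),
    add_sub_cancel_left]

end Cancellation

/-- Vertex version of the Lindström–Gessel–Viennot lemma.  `G` is a finite acyclic
directed graph (vertex set `V`, edge relation `E`, with no multiple edges since `E` is a
relation); a path is a list of vertices consecutively joined by directed edges; the weight
of a path is the product of the vertex weights `w(v)` over all its vertices; acyclicity is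
expressed by saying that any path whose first and last vertices coincide has at most one
vertex.  If `U` is the `k × k` matrix whose `(i,j)` entry is the sum of the weights of all
paths from `A i` to `B j`, then `det U` is the signed sum, over permutations `π`, of the
weights of all tuples of pairwise vertex-disjoint paths `γ i : A i → B (π i)`. -/
theorem stmt5 {V : Type*} [Fintype V] {R : Type*} [CommRing R]
    (E : V → V → Prop)
    (hacyclic : ∀ p : List V, p.Chain' E → p.head? = p.getLast? → p.length ≤ 1)
    (k : ℕ) (A B : Fin k → V) (w : V → R)
    (U : Matrix (Fin k) (Fin k) R)
    (hU : ∀ i j, U i j =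
      ∑ᶠ p : {p : List V //
          p.Chain' E ∧ p.head? = some (A i) ∧ p.getLast? = some (B j)},
        (p.1.map w).prod) :
    U.det =
      ∑ π : Equiv.Perm (Fin k), (Equiv.Perm.sign π : ℤ) •
        ∑ᶠ γ : {γ : Fin k → List V //
            (∀ i, (γ i).Chain' E ∧ (γ i).head? = some (A i) ∧
              (γ i).getLast? = some (B (π i))) ∧
            (∀ i j, i ≠ j → ∀ v ∈ γ i, v ∉ γ j)},
          ∏ i, ((γ.1 i).map w).prod := by
  let _ : LinearOrder V := LinearOrder.lift' _ (Fintype.equivFin V).injective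
  have hnodup (p : List V) (hp : p.IsChain E) : p.Nodup := hp.nodup_of_acyclic hacyclic
  let P (a b : V) := (finite_setOf_isPath hnodup a b).toFinset
  have hP (a b : V) (p : List V) : p ∈ P a b ↔ IsPath E a b p := Set.Finite.mem_toFinset _
  have hU' : U = Matrix.of fun i j => ∑ p ∈ P (A i) (B j), (p.map w).prod := by
    ext i j
    rw [Matrix.of_apply, hU]
    exact finsum_subtype_eq_sum (P := IsPath E (A i) (B j)) _ (hP _ _) fun p => (p.map w).prod
  rw [hU', Matrix.det_of_sum, sum_sign_smul_sum_eq_sum_pairwise_disjoint hnodup A B w P hP]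
  refine sum_congr rfl fun π _ => congrArg _ (finsum_subtype_eq_sum _ (fun γ => ?_) _).symm
  simp only [mem_filter, Fintype.mem_piFinset, hP]
  -- `Pairwise (List.Disjoint on γ)` unfolds to the disjointness condition of the statement
  rfl
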